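/- Conditionally-aligned expansion law in the relational model: for any set Σ, relations c, c' on Σ, subsets e, e' of Σ, and relations Q, R on Σ (used as bitests Q̇, Ṙ on Σ×Σ), the following equality of relations on Σ×Σ holds: (⟨[e];c])* ; ⟨[¬e]] ; ([[e'];c'⟩)* ; [[¬e']⟩ = ( Q̇;⟨[e];c] + Ṙ;[[e'];c'⟩ + (¬Q)̇;(¬R)̇;⟨[e];c | [e'];c'⟩ + (¬Q)̇;⟨[e];c | [¬e']⟩ + (¬R)̇;⟨[¬e] | [e'];c'⟩ )* ; ⟨[¬e] | [¬e']⟩, where + is union and * is reflexive-transitive closure. -/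

import Mathlib

namespace BiKAT

variable {S : Type*}

/-- Relational composition: (A ; B) x z iff ∃ y, A x y ∧ B y z. -/
def rcomp {α : Type*} (A B : α → α → Prop) : α → α → Prop :=
  fun x z => ∃ y, A x y ∧ B y z

/-- Union of relations. -/
def runion {α : Type*} (A B : α → α → Prop) : α → α → Prop :=
  fun x z => A x z ∨ B x z

/-- Reflexive-transitive closure. -/
def rstar {α : Type*} (A : α → α → Prop) : α → α → Prop :=
  Relation.ReflTransGen A

/-- Inclusion of relations, pointwise implication. -/
def rincl {α : Type*} (A B : α → α → Prop) : Prop := ∀ x y, A x y → B x y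

/-- Test: sub-identity relation of a set. -/
def test (e : Set S) : S → S → Prop := fun x y => x ∈ e ∧ y = x

/-- Left embedding ⟨c]. -/
def lemb (c : S → S → Prop) : S × S → S × S → Prop :=
  fun p q => c p.1 q.1 ∧ p.2 = q.2

/-- Right embedding [c⟩. -/
def remb (c : S → S → Prop) : S × S → S × S → Prop :=
  fun p q => c p.2 q.2 ∧ p.1 = q.1

/-- Two-argument embedding ⟨c|d⟩ := ⟨c] ; [d⟩. -/
def emb2 (c d : S → S → Prop) : S × S → S × S → Prop :=
  rcomp (lemb c) (remb d)

/-- Bitest Ṙ: sub-identity relation on Σ×Σ for a relation R on Σ. -/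
def bitest (R : S → S → Prop) : S × S → S × S → Prop :=
  fun p q => R p.1 p.2 ∧ q.1 = p.1 ∧ q.2 = p.2

/-- Havoc: the full relation. -/
def hav : S → S → Prop := fun _ _ => True

/-- while e do c := ([e];c)* ; [¬e]. -/
def wh (e : Set S) (c : S → S → Prop) : S → S → Prop :=
  rcomp (rstar (rcomp (test e) c)) (test eᶜ)

/-- The ∀∀ judgment c | d : R ≈> Sp. -/
def allall (c d R Sp : S → S → Prop) : Prop :=
  ∀ σ σ' τ τ', R σ σ' → c σ τ → d σ' τ' → Sp τ τ'

/-- Forward simulation judgment c | d : R ⇒∃ Sp. -/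
def fsim (c d R Sp : S → S → Prop) : Prop :=
  ∀ σ σ' τ, R σ σ' → c σ τ → ∃ τ', d σ' τ' ∧ Sp τ τ'

/-- Backward simulation judgment c | d : R ⇐∃ Sp. -/
def bsim (c d R Sp : S → S → Prop) : Prop :=
  ∀ σ τ τ', c σ τ → Sp τ τ' → ∃ σ', R σ σ' ∧ d σ' τ'

/-- Triple (componentwise) embedding ⟪a|b|c⟫ on Σ×Σ×Σ. -/
def tri (a b c : S → S → Prop) : S × S × S → S × S × S → Prop :=
  fun p q => a p.1 q.1 ∧ b p.2.1 q.2.1 ∧ c p.2.2 q.2.2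

/-- ⟦A ∥ B⟧: pairs of BiKAT elements agreeing on the middle execution. -/
def tpair (A B : S × S → S × S → Prop) : S × S × S → S × S × S → Prop :=
  fun p q => A (p.1, p.2.1) (q.1, q.2.1) ∧ B (p.2.1, p.2.2) (q.2.1, q.2.2)

/-- ⇙X: projection to the left two of three. -/
def proj2 (X : S × S × S → S × S × S → Prop) : S × S → S × S → Prop :=
  fun p q => ∃ s t, X (p.1, p.2, s) (q.1, q.2, t)

end BiKAT

open BiKAT

/-!
Both sides denote `⟨while e do c | while e' do c'⟩`. On the left this holds because the
embeddings `⟨-]` and `[-⟩` commute with composition and star. On the right, each step of the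
body moves each component by at most one step of its own loop body, so the star of the body
stays inside the product of the two stars; conversely, any two runs ending outside `e` and `e'`
can be interleaved by steps of the body.
-/

open Relation

namespace BiKAT

section

variable {α : Type*}

theorem rcomp_assoc (A B C : α → α → Prop) :
    rcomp (rcomp A B) C = rcomp A (rcomp B C) := by
  funext x w
  simp only [rcomp, eq_iff_iff]
  grind

theorem rcomp_test_iff {A : α → α → Prop} {e : Set α} {x y : α} :
    rcomp A (test e) x y ↔ A x y ∧ y ∈ e := by
  simp only [rcomp, test]
  grind

instance (A : α → α → Prop) : IsPreorder α (rstar A) :=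
  inferInstanceAs (IsPreorder α (ReflTransGen A))

theorem rstar_pair_of_rstar {β : Type*} {U : α × β → α × β → Prop} {A : α → α → Prop}
    {B : β → β → Prop} {a : α} {b : β}
    (hboth : ∀ x x' y y', A x x' → B y y' →
      U (x, y) (x', y) ∨ U (x, y) (x, y') ∨ U (x, y) (x', y'))
    (hleft : ∀ x x', A x x' → U (x, b) (x', b))
    (hright : ∀ y y', B y y' → U (a, y) (a, y'))
    {x : α} {y : β} (hx : rstar A x a) (hy : rstar B y b) :
    rstar U (x, y) (a, b) := by
  induction hx using ReflTransGen.head_induction_on generalizing y with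
  | refl =>
    induction hy using ReflTransGen.head_induction_on with
    | refl => exact .refl
    | head hyy' _ ihy => exact .head (hright _ _ hyy') ihy
  | head hxx' _ ihx =>
    induction hy using ReflTransGen.head_induction_on with
    | refl => exact .head (hleft _ _ hxx') (ihx .refl)
    | head hyy' hy' ihy =>
      rcases hboth _ _ _ _ hxx' hyy' with h | h | h
      · exact .head h (ihx (.head hyy' hy'))
      · exact .head h ihy
      · exact .head h (ihx hy')

end

variable {S : Type*}

theorem emb2_iff {c d : S → S → Prop} {p q : S × S} :
    emb2 c d p q ↔ c p.1 q.1 ∧ d p.2 q.2 := by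
  constructor
  · rintro ⟨m, ⟨h1, h2⟩, h3, h4⟩
    exact ⟨h4 ▸ h1, h2 ▸ h3⟩
  · rintro ⟨h1, h2⟩
    exact ⟨(q.1, p.2), ⟨h1, rfl⟩, h2, rfl⟩

theorem emb2_test (e e' : Set S) : emb2 (test e) (test e') = test (e ×ˢ e') := by
  funext p q
  rw [emb2_iff]
  simp only [test, Set.mem_prod, Prod.ext_iff]
  grind

instance (c d : S → S → Prop) [IsPreorder S c] [IsPreorder S d] :
    IsPreorder (S × S) (emb2 c d) where
  refl p := emb2_iff.2 ⟨refl_of c p.1, refl_of d p.2⟩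
  trans p q r hpq hqr := by
    rw [emb2_iff] at *
    exact ⟨_root_.trans hpq.1 hqr.1, _root_.trans hpq.2 hqr.2⟩

theorem bitest_rcomp_iff {P : S → S → Prop} {A : S × S → S × S → Prop} {p q : S × S} :
    rcomp (bitest P) A p q ↔ P p.1 p.2 ∧ A p q := by
  constructor
  · rintro ⟨m, ⟨hP, h1, h2⟩, hA⟩
    rw [Prod.ext h1 h2] at hA
    exact ⟨hP, hA⟩
  · rintro ⟨hP, hA⟩
    exact ⟨p, ⟨hP, rfl, rfl⟩, hA⟩

theorem lemb_rcomp (A B : S → S → Prop) : lemb (rcomp A B) = rcomp (lemb A) (lemb B) := by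
  funext p q
  apply propext
  constructor
  · rintro ⟨⟨y, h1, h2⟩, h⟩
    exact ⟨(y, p.2), ⟨h1, rfl⟩, h2, h⟩
  · rintro ⟨m, ⟨h1, h2⟩, h3, h4⟩
    exact ⟨⟨m.1, h1, h3⟩, h2.trans h4⟩

theorem remb_rcomp (A B : S → S → Prop) : remb (rcomp A B) = rcomp (remb A) (remb B) := by
  funext p q
  apply propext
  constructor
  · rintro ⟨⟨y, h1, h2⟩, h⟩
    exact ⟨(p.1, y), ⟨h1, rfl⟩, h2, h⟩
  · rintro ⟨m, ⟨h1, h2⟩, h3, h4⟩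
    exact ⟨⟨m.2, h1, h3⟩, h2.trans h4⟩

theorem rstar_lemb (c : S → S → Prop) : rstar (lemb c) = lemb (rstar c) := by
  funext p q
  apply propext
  constructor
  · intro h
    induction h with
    | refl => exact ⟨.refl, rfl⟩
    | tail _ hstep ih => exact ⟨ih.1.tail hstep.1, ih.2.trans hstep.2⟩
  · obtain ⟨p1, p2⟩ := p
    obtain ⟨q1, q2⟩ := q
    rintro ⟨h, rfl : p2 = q2⟩
    exact h.lift (·, p2) fun _ _ hab => ⟨hab, rfl⟩

theorem rstar_remb (c : S → S → Prop) : rstar (remb c) = remb (rstar c) := by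
  funext p q
  apply propext
  constructor
  · intro h
    induction h with
    | refl => exact ⟨.refl, rfl⟩
    | tail _ hstep ih => exact ⟨ih.1.tail hstep.1, ih.2.trans hstep.2⟩
  · obtain ⟨p1, p2⟩ := p
    obtain ⟨q1, q2⟩ := q
    rintro ⟨h, rfl : p1 = q1⟩
    exact h.lift (p1, ·) fun _ _ hab => ⟨hab, rfl⟩

theorem wh_iff {e : Set S} {c : S → S → Prop} {x y : S} :
    wh e c x y ↔ rstar (rcomp (test e) c) x y ∧ y ∉ e :=
  rcomp_test_iff

theorem rcomp_lemb_wh_remb_wh (e e' : Set S) (c c' : S → S → Prop) :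
    rcomp
      (rcomp (rcomp (rstar (lemb (rcomp (test e) c))) (lemb (test eᶜ)))
        (rstar (remb (rcomp (test e') c'))))
      (remb (test e'ᶜ)) = emb2 (wh e c) (wh e' c') := by
  rw [rstar_lemb, rstar_remb, ← lemb_rcomp, rcomp_assoc, ← remb_rcomp]
  rfl

def alignedBody (c c' : S → S → Prop) (e e' : Set S) (Q R : S → S → Prop) :
    S × S → S × S → Prop :=
  runion (runion (runion (runion
    (rcomp (bitest Q) (lemb (rcomp (test e) c)))
    (rcomp (bitest R) (remb (rcomp (test e') c'))))
    (rcomp (bitest (fun a b => ¬ Q a b))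
      (rcomp (bitest (fun a b => ¬ R a b))
        (emb2 (rcomp (test e) c) (rcomp (test e') c')))))
    (rcomp (bitest (fun a b => ¬ Q a b)) (emb2 (rcomp (test e) c) (test e'ᶜ))))
    (rcomp (bitest (fun a b => ¬ R a b)) (emb2 (test eᶜ) (rcomp (test e') c')))

variable {c c' : S → S → Prop} {e e' : Set S} {Q R : S → S → Prop}

theorem alignedBody_rincl :
    rincl (alignedBody c c' e e' Q R)
      (emb2 (rstar (rcomp (test e) c)) (rstar (rcomp (test e') c'))) := by
  intro p q h
  simp only [alignedBody, runion, bitest_rcomp_iff, emb2_iff, lemb, remb, test, rstar] at h ⊢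
  rcases h with (((h | h) | h) | h) | h <;> grind [ReflTransGen.single]

/-- Schedule: step left under `Q`, right under `R`, jointly otherwise; once one run has
terminated, the other continues alone through the `⟨c|[¬e']⟩` or `⟨[¬e]|c'⟩` branch. -/
theorem rstar_alignedBody_of_rstar {a : S} {b : S} (ha : a ∉ e) (hb : b ∉ e') {x y : S}
    (hx : rstar (rcomp (test e) c) x a) (hy : rstar (rcomp (test e') c') y b) :
    rstar (alignedBody c c' e e' Q R) (x, y) (a, b) := by
  refine rstar_pair_of_rstar ?_ ?_ ?_ hx hy <;>
    simp only [alignedBody, runion, bitest_rcomp_iff, emb2_iff, lemb, remb, test,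
      Set.mem_compl_iff] <;> grind

theorem rcomp_rstar_alignedBody :
    rcomp (rstar (alignedBody c c' e e' Q R)) (emb2 (test eᶜ) (test e'ᶜ)) =
      emb2 (wh e c) (wh e' c') := by
  funext p q
  apply propext
  rw [emb2_test, rcomp_test_iff, emb2_iff, wh_iff, wh_iff, Set.mem_prod]
  constructor
  · rintro ⟨hpq, ha, hb⟩
    obtain ⟨hx, hy⟩ := emb2_iff.1 (reflTransGen_le_of_le alignedBody_rincl p q hpq)
    exact ⟨⟨hx, ha⟩, hy, hb⟩
  · rintro ⟨⟨hx, ha⟩, hy, hb⟩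
    exact ⟨rstar_alignedBody_of_rstar ha hb hx hy, ha, hb⟩

end BiKAT

/-- Conditionally-aligned expansion law in the relational model. -/
theorem stmt11 (S : Type*) (c c' : S → S → Prop) (e e' : Set S) (Q R : S → S → Prop) :
    rcomp
      (rcomp (rcomp (rstar (lemb (rcomp (test e) c))) (lemb (test eᶜ)))
        (rstar (remb (rcomp (test e') c'))))
      (remb (test e'ᶜ)) =
    rcomp
      (rstar (runion (runion (runion (runion
        (rcomp (bitest Q) (lemb (rcomp (test e) c)))
        (rcomp (bitest R) (remb (rcomp (test e') c'))))
        (rcomp (bitest (fun a b => ¬ Q a b))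
          (rcomp (bitest (fun a b => ¬ R a b))
            (emb2 (rcomp (test e) c) (rcomp (test e') c')))))
        (rcomp (bitest (fun a b => ¬ Q a b)) (emb2 (rcomp (test e) c) (test e'ᶜ))))
        (rcomp (bitest (fun a b => ¬ R a b)) (emb2 (test eᶜ) (rcomp (test e') c')))))
      (emb2 (test eᶜ) (test e'ᶜ)) :=
  (rcomp_lemb_wh_remb_wh e e' c c').trans (rcomp_rstar_alignedBody (Q := Q) (R := R)).symm
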